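/- Let m ≥ 1, let y ∈ F₂^m, let l ≥ 3 be an integer, and set γ = 2π(m − 2·w_H(y))/2^l ∈ ℝ. Then the sum over all odd-weight vectors satisfies Σ_{v ∈ F₂^m, w_H(v) odd} (−1)^{y·v} (i tan(2π/2^l))^{w_H(v)} = i·sin(γ) · (sec(2π/2^l))^m. -/

import Mathlib

/-!
The weight enumerator `∑ᵥ (-1)^{y·v} t^{w(v)}` factors over the coordinates as
`(1 + t)^{m - w(y)} (1 - t)^{w(y)}`, and its odd-weight part is half the difference of its values
at `t` and `-t`. For `t = i tan θ`, `θ = 2π/2^l`, we have `1 ± t = e^{± iθ} / cos θ`, so these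
two values are `e^{± iγ} / cos^m θ`, whose half-difference is `i sin γ / cos^m θ`.
-/

open Matrix Finset

variable {ι R : Type*} [CommRing R]

lemma neg_one_pow_val_add (a b : ZMod 2) :
    (-1 : R) ^ (a + b).val = (-1 : R) ^ a.val * (-1 : R) ^ b.val := by
  rw [ZMod.val_add, ← neg_one_pow_eq_pow_mod_two, pow_add]

lemma neg_one_pow_val_sum (s : Finset ι) (c : ι → ZMod 2) :
    (-1 : R) ^ (∑ j ∈ s, c j).val = ∏ j ∈ s, (-1 : R) ^ (c j).val := by
  classical
  induction s using Finset.induction_on with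
  | empty => simp
  | insert j s hj ih => rw [sum_insert hj, prod_insert hj, neg_one_pow_val_add, ih]

lemma pow_hammingNorm_eq_prod [Fintype ι] (v : ι → ZMod 2) (t : R) :
    t ^ hammingNorm v = ∏ j, if v j = 0 then 1 else t := by
  simp [prod_ite, hammingNorm]

lemma sum_neg_one_pow_mul_pow_eq (b : ZMod 2) (t : R) :
    ∑ a : ZMod 2, (-1 : R) ^ (b * a).val * (if a = 0 then 1 else t)
      = if b = 0 then 1 + t else 1 - t := by
  rw [show (univ : Finset (ZMod 2)) = {0, 1} from rfl, sum_pair zero_ne_one]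
  obtain rfl | rfl : b = 0 ∨ b = 1 := by decide +revert
  · simp
  · simp [ZMod.val_one, sub_eq_add_neg]

lemma card_filter_eq_zero_add_hammingNorm [Fintype ι] (y : ι → ZMod 2) :
    #{j | y j = 0} + hammingNorm y = Fintype.card ι :=
  card_filter_add_card_filter_not _

lemma sum_neg_one_pow_dotProduct_mul_pow_hammingNorm [Fintype ι] [DecidableEq ι] (y : ι → ZMod 2) (t : R) :
    ∑ v : ι → ZMod 2, (-1 : R) ^ (y ⬝ᵥ v).val * t ^ hammingNorm v
      = (1 + t) ^ (Fintype.card ι - hammingNorm y) * (1 - t) ^ hammingNorm y := by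
  calc ∑ v : ι → ZMod 2, (-1 : R) ^ (y ⬝ᵥ v).val * t ^ hammingNorm v
      = ∑ v : ι → ZMod 2, ∏ j, (-1 : R) ^ (y j * v j).val * (if v j = 0 then 1 else t) := by
        simp only [dotProduct, neg_one_pow_val_sum, pow_hammingNorm_eq_prod, prod_mul_distrib]
    _ = ∏ j, if y j = 0 then 1 + t else 1 - t := by
        rw [← Fintype.prod_sum fun j (a : ZMod 2) ↦
          (-1 : R) ^ (y j * a).val * (if a = 0 then 1 else t)]
        simp only [sum_neg_one_pow_mul_pow_eq]
    _ = _ := by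
        rw [prod_ite, prod_const, prod_const, ← card_filter_eq_zero_add_hammingNorm y,
          Nat.add_sub_cancel]
        rfl

lemma two_mul_sum_filter_odd_eq_sub (s : Finset ι) (c : ι → R) (w : ι → ℕ) (t : R) :
    2 * ∑ a ∈ s with Odd (w a), c a * t ^ w a
      = ∑ a ∈ s, c a * t ^ w a - ∑ a ∈ s, c a * (-t) ^ w a := by
  rw [sum_filter, mul_sum, ← sum_sub_distrib]
  refine sum_congr rfl fun a _ ↦ ?_
  rcases Nat.even_or_odd (w a) with h | h
  · simp [h.neg_pow, Nat.not_odd_iff_even.2 h]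
  · simp only [h, h.neg_pow, if_true]
    ring

namespace Complex

lemma one_add_I_mul_tan {z : ℂ} (hz : cos z ≠ 0) : 1 + I * tan z = exp (z * I) / cos z := by
  rw [exp_mul_I, tan_eq_sin_div_cos]
  field_simp

lemma one_sub_I_mul_tan {z : ℂ} (hz : cos z ≠ 0) : 1 - I * tan z = exp (-z * I) / cos z := by
  simpa [cos_neg, tan_neg, sub_eq_add_neg] using one_add_I_mul_tan (z := -z) (by rwa [cos_neg])

lemma one_add_I_mul_tan_pow_mul_one_sub_pow {z : ℂ} (hz : cos z ≠ 0) (a b : ℕ) :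
    (1 + I * tan z) ^ a * (1 - I * tan z) ^ b = exp (z * (a - b) * I) / cos z ^ (a + b) := by
  rw [one_add_I_mul_tan hz, one_sub_I_mul_tan hz, div_pow, div_pow, div_mul_div_comm, ← pow_add,
    ← exp_nat_mul, ← exp_nat_mul, ← exp_add]
  congr 2
  ring

lemma sum_neg_one_pow_dotProduct_mul_I_mul_tan_pow [Fintype ι] [DecidableEq ι] (y : ι → ZMod 2) {z : ℂ}
    (hz : cos z ≠ 0) :
    ∑ v : ι → ZMod 2, (-1 : ℂ) ^ (y ⬝ᵥ v).val * (I * tan z) ^ hammingNorm v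
      = exp (z * (Fintype.card ι - 2 * hammingNorm y) * I) / cos z ^ Fintype.card ι := by
  have hw : hammingNorm y ≤ Fintype.card ι := hammingNorm_le_card_fintype
  rw [sum_neg_one_pow_dotProduct_mul_pow_hammingNorm, one_add_I_mul_tan_pow_mul_one_sub_pow hz,
    Nat.sub_add_cancel hw, Nat.cast_sub hw]
  ring_nf

theorem sum_filter_odd_hammingNorm_I_mul_tan [Fintype ι] [DecidableEq ι] (y : ι → ZMod 2) {z : ℂ}
    (hz : cos z ≠ 0) :
    ∑ v : ι → ZMod 2 with Odd (hammingNorm v), (-1 : ℂ) ^ (y ⬝ᵥ v).val * (I * tan z) ^ hammingNorm v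
      = I * sin (z * (Fintype.card ι - 2 * hammingNorm y)) / cos z ^ Fintype.card ι := by
  set γ := z * (Fintype.card ι - 2 * hammingNorm y)
  have hneg : -(I * tan z) = I * tan (-z) := by rw [tan_neg, mul_neg]
  have hsin : exp (γ * I) - exp (-γ * I) = 2 * I * sin γ := by
    rw [exp_mul_I, exp_mul_I, cos_neg, sin_neg]
    ring
  refine mul_left_cancel₀ (two_ne_zero (α := ℂ)) ?_
  rw [two_mul_sum_filter_odd_eq_sub, hneg, sum_neg_one_pow_dotProduct_mul_I_mul_tan_pow y hz,
    sum_neg_one_pow_dotProduct_mul_I_mul_tan_pow y (by rwa [cos_neg]), cos_neg, neg_mul,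
    div_sub_div_same, hsin]
  ring

end Complex

open Real in
lemma Real.cos_two_pi_div_two_pow_pos {l : ℕ} (hl : 3 ≤ l) : 0 < cos (2 * π / 2 ^ l) := by
  have h8 : (2 : ℝ) ^ 3 ≤ 2 ^ l := pow_le_pow_right₀ (by norm_num) hl
  have hle : 2 * π / 2 ^ l ≤ 2 * π / 2 ^ 3 := by gcongr
  refine cos_pos_of_mem_Ioo ⟨?_, ?_⟩
  · linarith [show 0 < 2 * π / 2 ^ l by positivity]
  · linarith [pi_pos]

theorem weight2_spc_odd_sum_general (m : ℕ) (y : Fin m → ZMod 2) (l : ℕ) (hl : 3 ≤ l) :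
    ∑ v ∈ Finset.univ.filter (fun v : Fin m → ZMod 2 => Odd (hammingNorm v)),
        (-1 : ℂ) ^ (y ⬝ᵥ v).val *
          (Complex.I * Real.tan (2 * Real.pi / 2 ^ l)) ^ hammingNorm v
      = Complex.I * (Real.sin (2 * Real.pi * ((m : ℝ) - 2 * (hammingNorm y : ℝ)) / 2 ^ l) : ℂ) *
          ((Real.cos (2 * Real.pi / 2 ^ l) : ℂ))⁻¹ ^ m := by
  have hcos : Complex.cos (2 * Real.pi / 2 ^ l : ℝ) ≠ 0 := by
    exact_mod_cast (Real.cos_two_pi_div_two_pow_pos hl).ne'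
  have h := Complex.sum_filter_odd_hammingNorm_I_mul_tan y hcos
  push_cast at h ⊢
  rw [Fintype.card_fin] at h
  rw [h, div_mul_eq_mul_div, inv_pow, div_eq_mul_inv]

/-- For `y ∈ F₂^m`, `l ≥ 3`, and `γ = 2π(m − 2·w_H(y))/2^l`, the sum over
all odd-weight vectors satisfies
`Σ_{v odd} (−1)^{y·v} (i tan(2π/2^l))^{w_H(v)} = i·sin(γ) · (sec(2π/2^l))^m`. -/
theorem weight2_spc_odd_sum (m : ℕ) (hm : 1 ≤ m) (y : Fin m → ZMod 2) (l : ℕ) (hl : 3 ≤ l) :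
    ∑ v ∈ Finset.univ.filter (fun v : Fin m → ZMod 2 => Odd (hammingNorm v)),
        (-1 : ℂ) ^ (y ⬝ᵥ v).val *
          (Complex.I * Real.tan (2 * Real.pi / 2 ^ l)) ^ hammingNorm v
      = Complex.I * (Real.sin (2 * Real.pi * ((m : ℝ) - 2 * (hammingNorm y : ℝ)) / 2 ^ l) : ℂ) *
          ((Real.cos (2 * Real.pi / 2 ^ l) : ℂ))⁻¹ ^ m :=
  weight2_spc_odd_sum_general m y l hl
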